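/- Let P be a Perron system and 𝔓 the associated family of unions of consecutive P-cylinders. Then for every set E ⊆ (0,1] and every α > 0 one has H^α(E) ≤ H^α(E, 𝔓) ≤ 3·H^α(E), where H^α denotes the usual α-dimensional Hausdorff measure; consequently 𝔓 is a faithful family of coverings for the Hausdorff dimension calculation on (0,1], i.e. dim_H(E, 𝔓) = dim_H(E) for every E ⊆ (0,1]. -/

import Mathlib

open Set Filter MeasureTheory
open scoped ENNReal

noncomputable section

/-- A Perron system `P = (φ_n)`: `φ₀ = φ []` and `φ_n(c₁,…,c_n) = φ [c₁,…,c_n]`;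
all values are positive integers. -/
structure PerronSystem where
  φ : List ℕ → ℕ
  φ_pos : ∀ l, 0 < φ l

/-- `(c₁−1)c₁⋯(c_n−1)c_n` (0-based indexing: `c 0 = c₁`). -/
def qprod (c : ℕ → ℕ) (n : ℕ) : ℝ :=
  ∏ i ∈ Finset.range n, (((c i : ℝ) - 1) * (c i : ℝ))

namespace PerronSystem

variable (P : PerronSystem)

/-- `r P c 0 = φ₀` and `r P c n = φ_n(c₁,…,c_n)`. -/
def r (c : ℕ → ℕ) (n : ℕ) : ℕ := P.φ (List.ofFn fun j : Fin n => c j)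

/-- The word `c₁ … c_k` is P-admissible: `c_i ≥ φ_{i−1}(c₁,…,c_{i−1}) + 1`. -/
def AdmissibleUpTo (c : ℕ → ℕ) (k : ℕ) : Prop := ∀ i < k, P.r c i + 1 ≤ c i

/-- The infinite digit sequence `c` is P-admissible. -/
def Admissible (c : ℕ → ℕ) : Prop := ∀ i, P.r c i + 1 ≤ c i

/-- `r₀ r₁ ⋯ r_{n−1}`. -/
def rprod (c : ℕ → ℕ) (n : ℕ) : ℝ := ∏ i ∈ Finset.range n, (P.r c i : ℝ)

/-- Diameter `D_k = r₀⋯r_{k−1} / ((c₁−1)c₁⋯(c_k−1)c_k)` of the cylinder with base `c₁…c_k`. -/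
def D (c : ℕ → ℕ) (k : ℕ) : ℝ := P.rprod c k / qprod c k

/-- `S_k`, the infimum of the positive Perron cylinder with base `c₁…c_k`. -/
def S (c : ℕ → ℕ) (k : ℕ) : ℝ :=
  ∑ n ∈ Finset.range k, P.rprod c (n + 1) / (qprod c n * (c n : ℝ))

/-- The positive Perron cylinder `Δ^P_{c₁…c_k} = (S_k, S_k + D_k]`. -/
def cyl (c : ℕ → ℕ) (k : ℕ) : Set ℝ := Ioc (P.S c k) (P.S c k + P.D c k)

/-- `A_k = ∑_{n=0}^{k−1} (−1)^n r₀⋯r_n / ((c₁−1)c₁⋯(c_n−1)c_n (c_{n+1}−1))`. -/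
def A (c : ℕ → ℕ) (k : ℕ) : ℝ :=
  ∑ n ∈ Finset.range k, (-1 : ℝ) ^ n * P.rprod c (n + 1) / (qprod c n * ((c n : ℝ) - 1))

/-- The second endpoint `A_k + (−1)^k D_k` of the interval `I_{c₁…c_k}`. -/
def altEnd (c : ℕ → ℕ) (k : ℕ) : ℝ := P.A c k + (-1 : ℝ) ^ k * P.D c k

/-- The countable set `IS^{P⁻}` of endpoints of the intervals `I_{c₁…c_k}`
(the word of length `0` contributes the endpoints `0` and `1`). -/
def IS : Set ℝ :=
  {x | ∃ (c : ℕ → ℕ) (k : ℕ), P.AdmissibleUpTo c k ∧ (x = P.A c k ∨ x = P.altEnd c k)}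

/-- The alternating Perron cylinder `Δ^{P⁻}_{c₁…c_k} = I_{c₁…c_k} \ IS^{P⁻}`. -/
def altCyl (c : ℕ → ℕ) (k : ℕ) : Set ℝ :=
  Ioo (min (P.A c k) (P.altEnd c k)) (max (P.A c k) (P.altEnd c k)) \ P.IS

/-- The family `𝔓` of all unions of consecutive positive Perron cylinders of the same
rank contained in a single cylinder of the previous rank. -/
def famP : Set (Set ℝ) :=
  {U | ∃ (c : ℕ → ℕ) (k n : ℕ), P.AdmissibleUpTo c k ∧ P.r c k + 1 ≤ n ∧
      ((∃ m, n ≤ m ∧ U = ⋃ i ∈ Finset.Icc n m, P.cyl (Function.update c k i) (k + 1)) ∨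
        U = ⋃ i ∈ {j : ℕ | n ≤ j}, P.cyl (Function.update c k i) (k + 1))}

/-- The subfamily `𝔓₁ ⊆ 𝔓` of finite unions. -/
def famP1 : Set (Set ℝ) :=
  {U | ∃ (c : ℕ → ℕ) (k n m : ℕ), P.AdmissibleUpTo c k ∧ P.r c k + 1 ≤ n ∧ n ≤ m ∧
      U = ⋃ i ∈ Finset.Icc n m, P.cyl (Function.update c k i) (k + 1)}

/-- The family `𝔓⁻` of all unions of consecutive alternating Perron cylinders of the same
rank contained in a single cylinder of the previous rank. -/
def famAlt : Set (Set ℝ) :=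
  {U | ∃ (c : ℕ → ℕ) (k n : ℕ), P.AdmissibleUpTo c k ∧ P.r c k + 1 ≤ n ∧
      ((∃ m, n ≤ m ∧ U = ⋃ i ∈ Finset.Icc n m, P.altCyl (Function.update c k i) (k + 1)) ∨
        U = ⋃ i ∈ {j : ℕ | n ≤ j}, P.altCyl (Function.update c k i) (k + 1))}

/-- The subfamily `𝔓₁⁻ ⊆ 𝔓⁻` of finite unions. -/
def famAlt1 : Set (Set ℝ) :=
  {U | ∃ (c : ℕ → ℕ) (k n m : ℕ), P.AdmissibleUpTo c k ∧ P.r c k + 1 ≤ n ∧ n ≤ m ∧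
      U = ⋃ i ∈ Finset.Icc n m, P.altCyl (Function.update c k i) (k + 1)}

/-- The value `Δ^P_c` of the positive Perron expansion with digit sequence `c`. -/
def posValue (c : ℕ → ℕ) : ℝ :=
  ∑' n : ℕ, P.rprod c (n + 1) / (qprod c n * (c n : ℝ))

/-- The value `Δ^{P⁻}_c` of the alternating Perron expansion with digit sequence `c`. -/
def altValue (c : ℕ → ℕ) : ℝ :=
  ∑' n : ℕ, (-1 : ℝ) ^ n * P.rprod c (n + 1) / (qprod c n * ((c n : ℝ) - 1))

end PerronSystem

/-- The Hausdorff `α`-dimensional measure of `E` with respect to a family of coverings `Φ`. -/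
def Hfam (Φ : Set (Set ℝ)) (α : ℝ) (E : Set ℝ) : ℝ≥0∞ :=
  ⨆ (ε : ℝ) (_ : 0 < ε),
    ⨅ (f : ℕ → Set ℝ) (_ : E ⊆ ⋃ n, f n) (_ : ∀ n, f n ∈ Φ)
      (_ : ∀ n, EMetric.diam (f n) ≤ ENNReal.ofReal ε),
      ∑' n : ℕ, EMetric.diam (f n) ^ α

/-- The Hausdorff dimension of `E` with respect to a family of coverings `Φ`:
`inf {α > 0 : H^α(E, Φ) = 0}` (equal to `∞` if no such `α` exists). -/
def dimFam (Φ : Set (Set ℝ)) (E : Set ℝ) : ℝ≥0∞ :=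
  ⨅ (α : ℝ) (_ : 0 < α) (_ : Hfam Φ α E = 0), ENNReal.ofReal α

end

/-!
`H^α(E) ≤ H^α(E, Φ)` holds for every family `Φ`, since `Φ` only restricts the admissible covers.
Conversely, a small set `s` meets `(0,1]` inside `{l} ∪ (l, u]`, where `l` and `u` are the
infimum and supremum of `s ∩ (0,1]`. The point `l` lies in arbitrarily small cylinders, and
`(l, u]` is covered by three members of `𝔓`: descend through the cylinders containing `u` to the
last one whose left end is `≤ l`. Inside it, `(l, u]` consists of a final segment of the
subcylinder containing `l`, a run of whole subcylinders (a member of `𝔓` of length `≤ u - l`),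
and an initial segment of the subcylinder containing `u`. An initial or final segment of length
`ℓ` of a cylinder lies in a member of `𝔓` of length `≤ 2ℓ`, so the two end pieces have total
length `≤ 2(u - l)`. For `α ≤ 1`, concavity of `t ↦ t^α` bounds the cost of the three pieces by
`3 (u - l)^α`; for `α > 1` the crude bound `3 · 2^α (u - l)^α` suffices, as `H^α` vanishes on
the line. So `H^α(E, 𝔓)` and `H^α(E)` vanish for the same `α`, and the dimensions agree.
-/

section FamilyHausdorff

theorem hausdorffMeasure_le_Hfam (Φ : Set (Set ℝ)) (α : ℝ) (E : Set ℝ) :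
    μH[α] E ≤ Hfam Φ α E := by
  rw [Measure.hausdorffMeasure_apply]
  refine iSup₂_le fun r hr => ?_
  obtain ⟨ε, -, hε, hεr⟩ := ENNReal.lt_iff_exists_real_btwn.1 hr
  refine le_iSup₂_of_le ε (ENNReal.ofReal_pos.1 hε) <| le_iInf fun f => le_iInf fun hcov =>
    le_iInf fun _ => le_iInf fun hdiam => ?_
  exact iInf₂_le_of_le f hcov <| iInf_le_of_le (fun n => (hdiam n).trans hεr.le) <|
    ENNReal.tsum_le_tsum fun n => iSup_le fun _ => le_rfl

variable {Φ : Set (Set ℝ)} {α : ℝ}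

theorem Hfam_le_Hfam_insert_empty (hα : 0 < α)
    (hsmall : ∀ r : ℝ≥0∞, 0 < r → ∃ U ∈ Φ, Metric.ediam U ≤ r) (E : Set ℝ) :
    Hfam Φ α E ≤ Hfam (insert ∅ Φ) α E := by
  refine iSup₂_mono fun ε hε => le_iInf fun f => le_iInf fun hcov => le_iInf fun hf =>
    le_iInf fun hdiam => ENNReal.le_of_forall_pos_le_add fun δ hδ _ => ?_
  obtain ⟨δ', hδ'0, hδ'⟩ := ENNReal.exists_pos_sum_of_countable (ENNReal.coe_ne_zero.2 hδ.ne') ℕ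
  have hg : ∀ n, ∃ g ∈ Φ, f n ⊆ g ∧ Metric.ediam g ≤ ENNReal.ofReal ε ∧
      Metric.ediam g ^ α ≤ Metric.ediam (f n) ^ α + δ' n := fun n => by
    rcases hf n with hn | hn
    · obtain ⟨T, hT, hTdiam⟩ := hsmall _ (lt_min (ENNReal.ofReal_pos.2 hε)
        (ENNReal.rpow_pos (ENNReal.coe_pos.2 (hδ'0 n)) ENNReal.coe_ne_top))
      exact ⟨T, hT, hn ▸ empty_subset T, hTdiam.trans (min_le_left _ _),
        ((ENNReal.le_rpow_inv_iff hα).1 (hTdiam.trans (min_le_right _ _))).trans le_add_self⟩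
    · exact ⟨f n, hn, subset_rfl, hdiam n, le_self_add⟩
  choose g hgΦ hfg hgdiam hgcost using hg
  refine iInf₂_le_of_le g (hcov.trans (iUnion_mono hfg)) <| iInf₂_le_of_le hgΦ hgdiam ?_
  calc ∑' n, Metric.ediam (g n) ^ α ≤ ∑' n, (Metric.ediam (f n) ^ α + δ' n) :=
        ENNReal.tsum_le_tsum hgcost
    _ ≤ ∑' n, Metric.ediam (f n) ^ α + δ := by
        rw [ENNReal.tsum_add]; gcongr

def CoversAtCost (Φ : Set (Set ℝ)) (Ω : Set ℝ) (α : ℝ) (K : ℝ≥0∞) : Prop :=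
  ∀ ε : ℝ, 0 < ε → ∃ r : ℝ≥0∞, 0 < r ∧ ∀ s : Set ℝ, Metric.ediam s ≤ r → ∀ γ : ℝ≥0∞, 0 < γ →
    ∃ g : ℕ → Set ℝ, (∀ i, g i ∈ Φ) ∧ s ∩ Ω ⊆ ⋃ i, g i ∧
      (∀ i, Metric.ediam (g i) ≤ ENNReal.ofReal ε) ∧
      ∑' i, Metric.ediam (g i) ^ α ≤ K * Metric.ediam s ^ α + γ

theorem Hfam_le_mul_hausdorffMeasure {Ω E : Set ℝ} {K : ℝ≥0∞} (hα : 0 < α) (hK₀ : K ≠ 0)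
    (hK : K ≠ ⊤) (hΦ : CoversAtCost Φ Ω α K) (hE : E ⊆ Ω) :
    Hfam Φ α E ≤ K * μH[α] E := by
  refine iSup₂_le fun ε hε => ?_
  obtain ⟨r, hr, hloc⟩ := hΦ ε hε
  rw [Measure.hausdorffMeasure_apply]
  refine le_trans ?_ (mul_le_mul_right (le_iSup₂_of_le r hr le_rfl) K)
  simp only [ENNReal.mul_iInf_of_ne hK₀ hK]
  refine le_iInf fun t => le_iInf fun hcov => le_iInf fun hdiam =>
    ENNReal.le_of_forall_pos_le_add fun δ hδ _ => ?_
  obtain ⟨δ', hδ'0, hδ'⟩ := ENNReal.exists_pos_sum_of_countable (ENNReal.coe_ne_zero.2 hδ.ne') ℕ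
  choose g hgΦ hgcov hgdiam hgcost using
    fun j => hloc (t j) (hdiam j) (δ' j) (ENNReal.coe_pos.2 (hδ'0 j))
  let f : ℕ → Set ℝ := fun N => g (Nat.unpair N).1 (Nat.unpair N).2
  have hcov' : E ⊆ ⋃ N, f N := fun x hx => by
    obtain ⟨j, hj⟩ := mem_iUnion.1 (hcov hx)
    obtain ⟨i, hi⟩ := mem_iUnion.1 (hgcov j ⟨hj, hE hx⟩)
    exact mem_iUnion.2 ⟨Nat.pair j i, by simpa only [f, Nat.unpair_pair] using hi⟩
  refine iInf₂_le_of_le f hcov' <| iInf₂_le_of_le (fun N => hgΦ _ _) (fun N => hgdiam _ _) ?_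
  have hnonempty : ∀ s : Set ℝ, (⨆ _ : s.Nonempty, Metric.ediam s ^ α) = Metric.ediam s ^ α :=
    fun s => by
      rcases s.eq_empty_or_nonempty with rfl | hs
      · simp [hα]
      · exact iSup_pos hs
  calc ∑' N, Metric.ediam (f N) ^ α = ∑' p : ℕ × ℕ, Metric.ediam (g p.1 p.2) ^ α :=
        Nat.pairEquiv.symm.tsum_eq fun p : ℕ × ℕ => Metric.ediam (g p.1 p.2) ^ α
    _ = ∑' j, ∑' i, Metric.ediam (g j i) ^ α :=
        ENNReal.tsum_prod (f := fun j i => Metric.ediam (g j i) ^ α)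
    _ ≤ ∑' j, (K * Metric.ediam (t j) ^ α + δ' j) := ENNReal.tsum_le_tsum hgcost
    _ ≤ K * (∑' j, ⨆ _ : (t j).Nonempty, Metric.ediam (t j) ^ α) + δ := by
        rw [ENNReal.tsum_add, ENNReal.tsum_mul_left]
        simp only [hnonempty]
        gcongr

theorem dimFam_eq_dimH {E : Set ℝ} (h : ∀ α : ℝ, 0 < α → μH[α] E = 0 → Hfam Φ α E = 0) :
    dimFam Φ E = dimH E := by
  refine le_antisymm (le_of_forall_gt_imp_ge_of_dense fun c hc => ?_) <|
    le_iInf fun α => le_iInf fun hα => le_iInf fun hΦ => ?_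
  · rcases eq_or_ne c ⊤ with rfl | hc_top
    · exact le_top
    have hα : 0 < c.toReal := ENNReal.toReal_pos (pos_of_gt hc).ne' hc_top
    have hμ : μH[c.toReal] E = 0 :=
      hausdorffMeasure_of_dimH_lt (d := c.toNNReal) (by rwa [ENNReal.coe_toNNReal hc_top])
    exact iInf₂_le_of_le c.toReal hα <| iInf_le_of_le (h _ hα hμ) (ENNReal.ofReal_toReal hc_top).le
  · have hμ : μH[α] E = 0 := le_antisymm ((hausdorffMeasure_le_Hfam Φ α E).trans hΦ.le) bot_le
    exact dimH_le_of_hausdorffMeasure_ne_top (d := α.toNNReal)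
      (by rw [Real.coe_toNNReal _ hα.le, hμ]; exact ENNReal.zero_ne_top)

def CoversIocByThree (Φ : Set (Set ℝ)) (a b : ℝ) : Prop :=
  ∃ U₁ U₂ U₃ : Set ℝ, U₁ ∈ insert ∅ Φ ∧ U₂ ∈ insert ∅ Φ ∧ U₃ ∈ insert ∅ Φ ∧
    Ioc a b ⊆ U₁ ∪ U₂ ∪ U₃ ∧ Metric.ediam U₁ ≤ ENNReal.ofReal (b - a) ∧
    Metric.ediam U₂ + Metric.ediam U₃ ≤ ENNReal.ofReal (2 * (b - a))

theorem coversIocByThree_of_Ioc {Φ : Set (Set ℝ)} {a b p q β t : ℝ} (hpa : p ≤ a) (haq : a ≤ q)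
    (hqβ : q ≤ β) (hβb : β < b) (hbt : b ≤ t) (hpq : q - p ≤ 2 * (q - a))
    (hβt : t - β ≤ 2 * (b - β)) (hqβΦ : Ioc q β ∈ insert ∅ Φ) (hpqΦ : Ioc p q ∈ insert ∅ Φ)
    (hβtΦ : Ioc β t ∈ insert ∅ Φ) : CoversIocByThree Φ a b := by
  refine ⟨_, _, _, hqβΦ, hpqΦ, hβtΦ, fun x hx => ?_, ?_, ?_⟩
  · rcases le_or_gt x q with hxq | hxq
    · exact Or.inl (Or.inr ⟨hpa.trans_lt hx.1, hxq⟩)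
    rcases le_or_gt x β with hxβ | hxβ
    exacts [Or.inl (Or.inl ⟨hxq, hxβ⟩), Or.inr ⟨hxβ, hx.2.trans hbt⟩]
  · rw [Real.ediam_Ioc]
    exact ENNReal.ofReal_le_ofReal (by linarith)
  · rw [Real.ediam_Ioc, Real.ediam_Ioc, ← ENNReal.ofReal_add (by linarith) (by linarith)]
    exact ENNReal.ofReal_le_ofReal (by linarith)

end FamilyHausdorff

namespace ENNReal

theorem rpow_add_rpow_le_two_mul_rpow {α : ℝ} (hα₀ : 0 < α) (hα₁ : α ≤ 1) {a b d : ℝ≥0∞}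
    (h : a + b ≤ 2 * d) : a ^ α + b ^ α ≤ 2 * d ^ α := by
  have hmean : (2⁻¹ * a ^ α + 2⁻¹ * b ^ α) ^ α⁻¹ ≤ d :=
    calc (2⁻¹ * a ^ α + 2⁻¹ * b ^ α) ^ α⁻¹ ≤ 2⁻¹ * (a ^ α) ^ α⁻¹ + 2⁻¹ * (b ^ α) ^ α⁻¹ :=
          rpow_arith_mean_le_arith_mean2_rpow _ _ _ _ inv_two_add_inv_two
            ((one_le_inv₀ hα₀).2 hα₁)
      _ = 2⁻¹ * (a + b) := by rw [rpow_rpow_inv hα₀.ne', rpow_rpow_inv hα₀.ne', mul_add]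
      _ ≤ d := by
          calc 2⁻¹ * (a + b) ≤ 2⁻¹ * (2 * d) := by gcongr
            _ = d := by rw [← mul_assoc, ENNReal.inv_mul_cancel two_ne_zero ofNat_ne_top, one_mul]
  rw [rpow_inv_le_iff hα₀] at hmean
  calc a ^ α + b ^ α = 2 * (2⁻¹ * a ^ α + 2⁻¹ * b ^ α) := by
        rw [← mul_add, ← mul_assoc, ENNReal.mul_inv_cancel two_ne_zero ofNat_ne_top, one_mul]
    _ ≤ 2 * d ^ α := by gcongr

theorem rpow_add_rpow_add_rpow_le_three_mul {α : ℝ} (hα₀ : 0 < α) (hα₁ : α ≤ 1)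
    (d d₁ d₂ d₃ : ℝ≥0∞) (h₁ : d₁ ≤ d) (h₂₃ : d₂ + d₃ ≤ 2 * d) :
    d₁ ^ α + d₂ ^ α + d₃ ^ α ≤ 3 * d ^ α :=
  calc d₁ ^ α + d₂ ^ α + d₃ ^ α = d₁ ^ α + (d₂ ^ α + d₃ ^ α) := add_assoc _ _ _
    _ ≤ d ^ α + 2 * d ^ α :=
        add_le_add (rpow_le_rpow h₁ hα₀.le) (rpow_add_rpow_le_two_mul_rpow hα₀ hα₁ h₂₃)
    _ = 3 * d ^ α := by ring

theorem rpow_add_rpow_add_rpow_le_three_mul_two_rpow_mul {α : ℝ} (hα : 0 ≤ α)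
    (d d₁ d₂ d₃ : ℝ≥0∞) (h₁ : d₁ ≤ d) (h₂₃ : d₂ + d₃ ≤ 2 * d) :
    d₁ ^ α + d₂ ^ α + d₃ ^ α ≤ 3 * 2 ^ α * d ^ α := by
  have h₁' : d₁ ≤ 2 * d := h₁.trans (le_mul_of_one_le_left' one_le_two)
  calc d₁ ^ α + d₂ ^ α + d₃ ^ α ≤ (2 * d) ^ α + (2 * d) ^ α + (2 * d) ^ α := by
        gcongr
        exacts [le_self_add.trans h₂₃, le_add_self.trans h₂₃]
    _ = 3 * 2 ^ α * d ^ α := by rw [mul_rpow_of_nonneg _ _ hα]; ring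

end ENNReal

theorem hausdorffMeasure_real_eq_zero_of_one_lt {α : ℝ} (hα : 1 < α) (E : Set ℝ) :
    μH[α] E = 0 := by
  have hdim : dimH E < α.toNNReal :=
    calc dimH E ≤ 1 := (dimH_mono (subset_univ E)).trans_eq Real.dimH_univ
      _ < α.toNNReal := ENNReal.one_lt_coe_iff.2 (Real.one_lt_toNNReal.2 hα)
  simpa [Real.coe_toNNReal _ (zero_le_one.trans hα.le)] using hausdorffMeasure_of_dimH_lt hdim

theorem exists_mem_Ioc_add_div {B R x : ℝ} {j : ℕ} (hj : 0 < j)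
    (hx : x ∈ Ioc B (B + R / j)) : ∃ n, j ≤ n ∧ x ∈ Ioc (B + R / (n + 1)) (B + R / n) := by
  obtain ⟨hBx, hxj⟩ := hx
  have hxB : 0 < x - B := sub_pos.2 hBx
  have hj' : (0 : ℝ) < j := by exact_mod_cast hj
  have hjt : (j : ℝ) ≤ R / (x - B) := by
    rw [le_div_iff₀ hxB, mul_comm, ← le_div_iff₀ hj']; linarith
  set n := ⌊R / (x - B)⌋₊
  have hjn : j ≤ n := Nat.le_floor hjt
  have hn : (0 : ℝ) < n := by exact_mod_cast hj.trans_le hjn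
  refine ⟨n, hjn, ?_, ?_⟩
  · have := Nat.lt_floor_add_one (R / (x - B))
    rw [div_lt_iff₀ hxB] at this
    rw [← lt_sub_iff_add_lt', div_lt_iff₀ (by positivity)]; linarith
  · have := Nat.floor_le (hj'.le.trans hjt)
    rw [le_div_iff₀ hxB] at this
    rw [← sub_le_iff_le_add', le_div_iff₀ hn]; linarith

theorem two_mul_div_le_div_add_div {R r n : ℝ} (hR : 0 ≤ R) (hr : 0 < r) (hrn : r + 1 ≤ n) :
    2 * (R / n) ≤ R / r + R / (n + 1) := by
  have h : 2 / n ≤ 1 / r + 1 / (n + 1) := by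
    rw [div_add_div _ _ hr.ne' (by linarith),
      div_le_div_iff₀ (by linarith) (mul_pos hr (by linarith))]
    nlinarith
  calc 2 * (R / n) = R * (2 / n) := by ring
    _ ≤ R * (1 / r + 1 / (n + 1)) := by gcongr
    _ = R / r + R / (n + 1) := by ring

theorem qprod_congr {c c' : ℕ → ℕ} {n : ℕ} (h : ∀ j < n, c j = c' j) :
    qprod c n = qprod c' n :=
  Finset.prod_congr rfl fun i hi => by rw [h i (Finset.mem_range.1 hi)]

namespace PerronSystem

variable (P : PerronSystem)

theorem r_pos (c : ℕ → ℕ) (n : ℕ) : 0 < P.r c n := P.φ_pos _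

theorem rprod_pos (c : ℕ → ℕ) (n : ℕ) : 0 < P.rprod c n :=
  Finset.prod_pos fun i _ => Nat.cast_pos.2 (P.r_pos c i)

theorem r_congr {c c' : ℕ → ℕ} {n : ℕ} (h : ∀ j < n, c j = c' j) : P.r c n = P.r c' n := by
  simp only [r]
  congr 2
  exact funext fun j => h j j.isLt

theorem rprod_congr {c c' : ℕ → ℕ} {n : ℕ} (h : ∀ j, j + 1 < n → c j = c' j) :
    P.rprod c n = P.rprod c' n :=
  Finset.prod_congr rfl fun i hi => by
    rw [P.r_congr fun j hj => h j (by have := Finset.mem_range.1 hi; omega)]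

theorem S_congr {c c' : ℕ → ℕ} {k : ℕ} (h : ∀ j < k, c j = c' j) : P.S c k = P.S c' k :=
  Finset.sum_congr rfl fun n hn => by
    have hn := Finset.mem_range.1 hn
    rw [P.rprod_congr fun j hj => h j (by omega), qprod_congr fun j hj => h j (by omega), h n hn]

noncomputable def scale (c : ℕ → ℕ) (k : ℕ) : ℝ := P.rprod c (k + 1) / qprod c k

theorem scale_div_r (c : ℕ → ℕ) (k : ℕ) : P.scale c k / P.r c k = P.D c k := by
  have hr : (P.r c k : ℝ) ≠ 0 := (Nat.cast_pos.2 (P.r_pos c k)).ne'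
  rw [scale, D, rprod, Finset.prod_range_succ, ← rprod]
  field_simp

variable {P} {c : ℕ → ℕ} {k : ℕ}

theorem AdmissibleUpTo.two_le (h : P.AdmissibleUpTo c k) {i : ℕ} (hi : i < k) : 2 ≤ c i :=
  le_trans (Nat.succ_le_succ (P.r_pos c i)) (h i hi)

theorem AdmissibleUpTo.qprod_pos (h : P.AdmissibleUpTo c k) : 0 < qprod c k :=
  Finset.prod_pos fun i hi => by
    have : (2 : ℝ) ≤ c i := by exact_mod_cast h.two_le (Finset.mem_range.1 hi)
    nlinarith

theorem AdmissibleUpTo.scale_pos (h : P.AdmissibleUpTo c k) : 0 < P.scale c k :=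
  div_pos (P.rprod_pos c (k + 1)) h.qprod_pos

theorem AdmissibleUpTo.update (h : P.AdmissibleUpTo c k) {i : ℕ} (hi : P.r c k + 1 ≤ i) :
    P.AdmissibleUpTo (Function.update c k i) (k + 1) := by
  intro j hj
  rw [P.r_congr fun l hl => Function.update_of_ne (by omega) i c]
  rcases Nat.lt_succ_iff_lt_or_eq.1 hj with hjk | rfl
  · rw [Function.update_of_ne hjk.ne]; exact h j hjk
  · rwa [Function.update_self]

theorem S_update (c : ℕ → ℕ) (k i : ℕ) :
    P.S (Function.update c k i) (k + 1) = P.S c k + P.scale c k / i := by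
  have hc : ∀ j < k, Function.update c k i j = c j := fun j hj => Function.update_of_ne hj.ne i c
  rw [S, Finset.sum_range_succ, ← S, P.S_congr hc, P.rprod_congr fun j hj => hc j (by omega),
    qprod_congr hc, Function.update_self, scale, div_div]

theorem D_update (c : ℕ → ℕ) (k i : ℕ) :
    P.D (Function.update c k i) (k + 1) = P.scale c k / ((i - 1) * i) := by
  have hc : ∀ j < k, Function.update c k i j = c j := fun j hj => Function.update_of_ne hj.ne i c
  rw [D, P.rprod_congr fun j hj => hc j (by omega), qprod, Finset.prod_range_succ, ← qprod,
    qprod_congr hc, Function.update_self, scale, div_div]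

theorem S_add_D_update (c : ℕ → ℕ) (k : ℕ) {n : ℕ} (hn : 0 < n) :
    P.S (Function.update c k (n + 1)) (k + 1) + P.D (Function.update c k (n + 1)) (k + 1) =
      P.S c k + P.scale c k / n := by
  have hn' : (n : ℝ) ≠ 0 := by positivity
  rw [S_update, D_update, add_assoc]
  push_cast
  rw [add_sub_cancel_right]
  congr 1
  field_simp

theorem cyl_update (c : ℕ → ℕ) (k : ℕ) {n : ℕ} (hn : 0 < n) :
    P.cyl (Function.update c k (n + 1)) (k + 1) =
      Ioc (P.S c k + P.scale c k / (n + 1)) (P.S c k + P.scale c k / n) := by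
  rw [cyl, S_add_D_update c k hn, S_update]
  push_cast
  rfl

theorem ediam_cyl (c : ℕ → ℕ) (k : ℕ) : Metric.ediam (P.cyl c k) = ENNReal.ofReal (P.D c k) := by
  rw [cyl, Real.ediam_Ioc, add_sub_cancel_left]

theorem AdmissibleUpTo.Ioc_mem_famP (h : P.AdmissibleUpTo c k) {j : ℕ} (hj : P.r c k ≤ j) :
    Ioc (P.S c k) (P.S c k + P.scale c k / j) ∈ P.famP := by
  have hj0 : 0 < j := (P.r_pos c k).trans_le hj
  refine ⟨c, k, j + 1, h, by omega, Or.inr ?_⟩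
  ext x
  simp only [mem_iUnion, mem_ofPred_eq, exists_prop]
  constructor
  · intro hx
    obtain ⟨n, hjn, hxn⟩ := exists_mem_Ioc_add_div hj0 hx
    exact ⟨n + 1, by omega, by rwa [P.cyl_update c k (hj0.trans_le hjn)]⟩
  · rintro ⟨i, hi, hx⟩
    obtain ⟨n, rfl⟩ : ∃ n, i = n + 1 := ⟨i - 1, by omega⟩
    rw [P.cyl_update c k (by omega)] at hx
    refine Ioc_subset_Ioc (le_add_of_nonneg_right (by have := h.scale_pos; positivity)) ?_ hx
    gcongr
    · exact h.scale_pos.le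
    · exact_mod_cast (by omega : j ≤ n)

theorem AdmissibleUpTo.Ioc_mem_famP_of_lt (h : P.AdmissibleUpTo c k) {j m : ℕ} (hj : P.r c k ≤ j)
    (hjm : j < m) : Ioc (P.S c k + P.scale c k / m) (P.S c k + P.scale c k / j) ∈ P.famP := by
  have hj0 : 0 < j := (P.r_pos c k).trans_le hj
  have hR := h.scale_pos
  refine ⟨c, k, j + 1, h, by omega, Or.inl ⟨m, hjm, ?_⟩⟩
  ext x
  simp only [mem_iUnion, Finset.mem_Icc, exists_prop]
  constructor
  · intro hx
    obtain ⟨n, hjn, hxn⟩ := exists_mem_Ioc_add_div hj0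
      ⟨(le_add_of_nonneg_right (by positivity)).trans_lt hx.1, hx.2⟩
    have hn : 0 < n := hj0.trans_le hjn
    have hnm : (n : ℝ) < m := by
      have := hx.1.trans_le hxn.2
      rwa [add_lt_add_iff_left, div_lt_div_iff_of_pos_left hR
        (by exact_mod_cast hj0.trans hjm) (by exact_mod_cast hn)] at this
    exact ⟨n + 1, ⟨by omega, by exact_mod_cast hnm⟩, by rwa [P.cyl_update c k hn]⟩
  · rintro ⟨i, ⟨hji, him⟩, hx⟩
    obtain ⟨n, rfl⟩ : ∃ n, i = n + 1 := ⟨i - 1, by omega⟩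
    rw [P.cyl_update c k (by omega)] at hx
    refine Ioc_subset_Ioc ?_ ?_ hx <;> gcongr
    · exact_mod_cast him
    · exact_mod_cast (by omega : j ≤ n)

theorem AdmissibleUpTo.cyl_mem_famP (h : P.AdmissibleUpTo c k) : P.cyl c k ∈ P.famP := by
  simpa only [cyl, P.scale_div_r c k] using h.Ioc_mem_famP le_rfl

theorem exists_mem_cyl_update {x : ℝ} (hx : x ∈ P.cyl c k) :
    ∃ n, P.r c k ≤ n ∧ x ∈ P.cyl (Function.update c k (n + 1)) (k + 1) := by
  rw [cyl, ← P.scale_div_r c k] at hx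
  obtain ⟨n, hn, hxn⟩ := exists_mem_Ioc_add_div (P.r_pos c k) hx
  exact ⟨n, hn, by rwa [P.cyl_update c k ((P.r_pos c k).trans_le hn)]⟩

theorem AdmissibleUpTo.D_update_le_half (h : P.AdmissibleUpTo c k) {n : ℕ} (hn : P.r c k ≤ n) :
    P.D (Function.update c k (n + 1)) (k + 1) ≤ P.D c k / 2 := by
  have hr : (1 : ℝ) ≤ P.r c k := by exact_mod_cast P.r_pos c k
  have hrn : (P.r c k : ℝ) ≤ n := by exact_mod_cast hn
  rw [D_update, ← P.scale_div_r c k, div_div]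
  push_cast
  rw [add_sub_cancel_right]
  exact div_le_div_of_nonneg_left h.scale_pos.le (by positivity) (by nlinarith)

theorem cylinder_induction {p : (ℕ → ℕ) → ℕ → Prop} {δ : ℝ} (hδ : 0 < δ)
    (small : ∀ c k, P.AdmissibleUpTo c k → P.D c k ≤ δ → p c k)
    (step : ∀ c k, P.AdmissibleUpTo c k →
      (∀ n, P.r c k ≤ n → p (Function.update c k (n + 1)) (k + 1)) → p c k)
    (h : P.AdmissibleUpTo c k) : p c k := by
  suffices ∀ N : ℕ, ∀ c k, P.AdmissibleUpTo c k → P.D c k ≤ 2 ^ N * δ → p c k by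
    obtain ⟨N, hN⟩ := pow_unbounded_of_one_lt (P.D c k / δ) one_lt_two
    exact this N c k h ((div_le_iff₀ hδ).1 hN.le)
  intro N
  induction N with
  | zero => simpa using small
  | succ N ih =>
    refine fun c k h hD => step c k h fun n hn => ih _ _ (h.update (by omega)) ?_
    calc P.D (Function.update c k (n + 1)) (k + 1) ≤ P.D c k / 2 := h.D_update_le_half hn
      _ ≤ 2 ^ N * δ := by rw [pow_succ] at hD; linarith

theorem admissibleUpTo_zero (c : ℕ → ℕ) : P.AdmissibleUpTo c 0 :=
  fun _ hi => absurd hi (Nat.not_lt_zero _)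

theorem cyl_zero (c : ℕ → ℕ) : P.cyl c 0 = Ioc 0 1 := by simp [cyl, S, D, rprod, qprod]

theorem exists_mem_famP_ediam_le {x : ℝ} (hx : x ∈ Ioc (0 : ℝ) 1) {r : ℝ≥0∞} (hr : 0 < r) :
    ∃ U ∈ P.famP, x ∈ U ∧ Metric.ediam U ≤ r := by
  obtain ⟨δ, -, hδ, hδr⟩ := ENNReal.lt_iff_exists_real_btwn.1 hr
  refine P.cylinder_induction (p := fun c k => x ∈ P.cyl c k → ∃ U ∈ P.famP, x ∈ U ∧
      Metric.ediam U ≤ r) (ENNReal.ofReal_pos.1 hδ) (fun c k h hD hxc => ?_)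
    (fun c k h ih hxc => ?_) (P.admissibleUpTo_zero fun _ => 0) (by rwa [cyl_zero])
  · refine ⟨_, h.cyl_mem_famP, hxc, ?_⟩
    rw [ediam_cyl]
    exact (ENNReal.ofReal_le_ofReal hD).trans hδr.le
  · obtain ⟨n, hn, hxn⟩ := exists_mem_cyl_update hxc
    exact ih n hn hxn

theorem AdmissibleUpTo.exists_initialSegment_mem_famP (h : P.AdmissibleUpTo c k) {b : ℝ}
    (hb : b ∈ P.cyl c k) :
    ∃ t, b ≤ t ∧ t - P.S c k ≤ 2 * (b - P.S c k) ∧ Ioc (P.S c k) t ∈ P.famP := by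
  obtain ⟨n, hn, hbn⟩ := exists_mem_cyl_update hb
  have hn0 : 0 < n := (P.r_pos c k).trans_le hn
  rw [P.cyl_update c k hn0] at hbn
  refine ⟨_, hbn.2, ?_, h.Ioc_mem_famP hn⟩
  have hn1 : (1 : ℝ) ≤ n := by exact_mod_cast hn0
  have : P.scale c k / n ≤ 2 * (P.scale c k / (n + 1)) := by
    rw [← mul_div_assoc, div_le_div_iff₀ (by positivity) (by positivity)]
    nlinarith [h.scale_pos]
  linarith [hbn.1]

theorem AdmissibleUpTo.exists_finalSegment_mem_famP (h : P.AdmissibleUpTo c k) {a : ℝ}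
    (ha : P.S c k ≤ a) (ha' : a ≤ P.S c k + P.D c k) :
    ∃ s ≤ a, P.S c k + P.D c k - s ≤ 2 * (P.S c k + P.D c k - a) ∧
      Ioc s (P.S c k + P.D c k) ∈ insert ∅ P.famP := by
  set T := P.S c k + P.D c k
  rcases ha'.eq_or_lt with rfl | ha'
  · exact ⟨T, le_rfl, by simp, by simp⟩
  suffices ∃ s ≤ a, T - s ≤ 2 * (T - a) ∧ Ioc s T ∈ P.famP from
    this.imp fun s ⟨hs, hsT, hmem⟩ => ⟨hs, hsT, mem_insert_of_mem _ hmem⟩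
  have whole : ∀ c k, P.AdmissibleUpTo c k → P.S c k = a → P.S c k + P.D c k = T →
      ∃ s ≤ a, T - s ≤ 2 * (T - a) ∧ Ioc s T ∈ P.famP := fun c k h hS hT =>
    ⟨a, le_rfl, by linarith, by rw [← hT, ← hS]; exact h.cyl_mem_famP⟩
  refine P.cylinder_induction (p := fun c k => P.S c k ≤ a → P.S c k + P.D c k = T →
      ∃ s ≤ a, T - s ≤ 2 * (T - a) ∧ Ioc s T ∈ P.famP) (sub_pos.2 ha')
    (fun c k h hD hS hT => whole c k h (by linarith) hT) (fun c k h ih hS hT => ?_) h ha rfl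
  rcases hS.eq_or_lt with hS | hS
  · exact whole c k h hS hT
  obtain ⟨n, hn, han⟩ := exists_mem_cyl_update (show a ∈ P.cyl c k from ⟨hS, hT ▸ ha'.le⟩)
  have hr := P.r_pos c k
  -- In the top subcylinder the final segment has the same right end, so descend; otherwise the
  -- subcylinders from that of `a` up to the top form one member of `𝔓`.
  rcases hn.eq_or_lt with rfl | hn
  · exact ih _ le_rfl han.1.le (by rw [S_add_D_update c k hr, scale_div_r, hT])
  rw [P.cyl_update c k (hr.trans hn)] at han
  have hcvx := two_mul_div_le_div_add_div h.scale_pos.le (Nat.cast_pos.2 hr)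
    (show (P.r c k : ℝ) + 1 ≤ n by exact_mod_cast hn)
  have hmem := h.Ioc_mem_famP_of_lt le_rfl (show P.r c k < n + 1 by omega)
  rw [scale_div_r, hT] at hmem
  push_cast at hmem
  refine ⟨_, han.1.le, ?_, hmem⟩
  have hTR : T = P.S c k + P.scale c k / P.r c k := by rw [← hT, scale_div_r]
  rw [hTR]
  linarith [han.2]

theorem AdmissibleUpTo.coversIocByThree_of_lt_S_update (h : P.AdmissibleUpTo c k) {a b : ℝ}
    (hS : P.S c k ≤ a) {n : ℕ} (hn : P.r c k ≤ n)
    (hb : b ∈ P.cyl (Function.update c k (n + 1)) (k + 1))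
    (ha : a < P.S c k + P.scale c k / (n + 1)) : CoversIocByThree P.famP a b := by
  have hn0 : 0 < n := (P.r_pos c k).trans_le hn
  obtain ⟨t, hbt, ht, hβt⟩ := (h.update (by omega)).exists_initialSegment_mem_famP hb
  rw [S_update] at ht hβt
  push_cast at ht hβt
  rw [P.cyl_update c k hn0] at hb
  set β := P.S c k + P.scale c k / (n + 1)
  have hR := h.scale_pos
  obtain ⟨p, q, hpa, haq, hqβ, hpq, hqβΦ, hpqΦ⟩ : ∃ p q, p ≤ a ∧ a ≤ q ∧ q ≤ β ∧
      q - p ≤ 2 * (q - a) ∧ Ioc q β ∈ insert ∅ P.famP ∧ Ioc p q ∈ insert ∅ P.famP := by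
    rcases hS.eq_or_lt with rfl | hS
    · refine ⟨_, _, le_rfl, le_rfl, ha.le, by simp, mem_insert_of_mem _ ?_, by simp⟩
      simpa using h.Ioc_mem_famP (j := n + 1) (by omega)
    have haD : a ≤ P.S c k + P.D c k := by
      have : P.scale c k / (n + 1) ≤ P.scale c k / P.r c k := by
        gcongr
        · exact_mod_cast P.r_pos c k
        · exact_mod_cast (by omega : P.r c k ≤ n + 1)
      linarith [P.scale_div_r c k]
    obtain ⟨m, hm, ham⟩ := exists_mem_cyl_update (show a ∈ P.cyl c k from ⟨hS, haD⟩)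
    have hm0 : 0 < m := (P.r_pos c k).trans_le hm
    obtain ⟨p, hpa, hpq, hpqΦ⟩ :=
      (h.update (by omega)).exists_finalSegment_mem_famP ham.1.le ham.2
    rw [S_add_D_update c k hm0] at hpq hpqΦ
    rw [P.cyl_update c k hm0] at ham
    have hnm : n + 1 ≤ m := by
      have : P.scale c k / (m + 1) < P.scale c k / (n + 1) := by linarith [ham.1]
      rw [div_lt_div_iff_of_pos_left hR (by positivity) (by positivity)] at this
      have : n < m := by exact_mod_cast (by linarith : (n : ℝ) < m)
      omega
    refine ⟨p, _, hpa, ham.2, ?_, hpq, ?_, hpqΦ⟩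
    · have : P.scale c k / m ≤ P.scale c k / (n + 1) := by gcongr; exact_mod_cast hnm
      linarith
    rcases hnm.eq_or_lt with rfl | hlt
    · left; push_cast; exact Ioc_self _
    · right; simpa using h.Ioc_mem_famP_of_lt (by omega) hlt
  exact coversIocByThree_of_Ioc hpa haq hqβ hb.1 hbt hpq ht hqβΦ hpqΦ (mem_insert_of_mem _ hβt)

theorem coversIocByThree_famP {a b : ℝ} (ha : 0 ≤ a) (hab : a ≤ b) (hb : b ≤ 1) :
    CoversIocByThree P.famP a b := by
  rcases hab.eq_or_lt with rfl | hab
  · exact ⟨∅, ∅, ∅, mem_insert _ _, mem_insert _ _, mem_insert _ _, by simp, by simp, by simp⟩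
  refine P.cylinder_induction
    (p := fun c k => P.S c k ≤ a → b ∈ P.cyl c k → CoversIocByThree P.famP a b) (sub_pos.2 hab)
    (fun c k h hD hS hbc => ?_) (fun c k h ih hS hbc => ?_) (P.admissibleUpTo_zero fun _ => 0)
    (by simpa [S] using ha) (by rw [cyl_zero]; exact ⟨ha.trans_lt hab, hb⟩)
  · refine ⟨P.cyl c k, ∅, ∅, mem_insert_of_mem _ h.cyl_mem_famP, mem_insert _ _, mem_insert _ _,
      fun x hx => Or.inl (Or.inl ⟨hS.trans_lt hx.1, hx.2.trans hbc.2⟩), ?_, by simp⟩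
    rw [ediam_cyl]
    exact ENNReal.ofReal_le_ofReal hD
  · obtain ⟨n, hn, hbn⟩ := exists_mem_cyl_update hbc
    rcases le_or_gt (P.S (Function.update c k (n + 1)) (k + 1)) a with hsplit | hsplit
    · exact ih n hn hsplit hbn
    · rw [S_update] at hsplit
      push_cast at hsplit
      exact h.coversIocByThree_of_lt_S_update hS hn hbn hsplit

theorem exists_cover_Icc_inter_Ioc {α : ℝ} {K : ℝ≥0∞} (hα : 0 < α)
    (hK : ∀ d d₁ d₂ d₃ : ℝ≥0∞, d₁ ≤ d → d₂ + d₃ ≤ 2 * d → d₁ ^ α + d₂ ^ α + d₃ ^ α ≤ K * d ^ α)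
    {l u ε : ℝ} (hl : 0 ≤ l) (hlu : l ≤ u) (hu : u ≤ 1) (hε : 0 < ε) (hulε : 2 * (u - l) ≤ ε)
    {γ : ℝ≥0∞} (hγ : 0 < γ) :
    ∃ g : ℕ → Set ℝ, (∀ i, g i ∈ insert ∅ P.famP) ∧ Icc l u ∩ Ioc 0 1 ⊆ ⋃ i, g i ∧
      (∀ i, Metric.ediam (g i) ≤ ENNReal.ofReal ε) ∧
      ∑' i, Metric.ediam (g i) ^ α ≤ K * ENNReal.ofReal (u - l) ^ α + γ := by
  obtain ⟨U₁, U₂, U₃, h₁, h₂, h₃, hcov, hd₁, hd₂₃⟩ := P.coversIocByThree_famP hl hlu hu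
  obtain ⟨T, hT, hlT, hTd, hTγ⟩ : ∃ T ∈ insert ∅ P.famP, (0 < l → l ∈ T) ∧
      Metric.ediam T ≤ ENNReal.ofReal ε ∧ Metric.ediam T ^ α ≤ γ := by
    rcases hl.eq_or_lt with h0 | h0
    · exact ⟨∅, mem_insert _ _, fun h => absurd h0 h.ne, by simp,
        by simp [ENNReal.zero_rpow_of_pos hα]⟩
    obtain ⟨T, hT, hlT, hTd⟩ := P.exists_mem_famP_ediam_le ⟨h0, hlu.trans hu⟩
      (lt_min (ENNReal.ofReal_pos.2 hε) (ENNReal.rpow_pos_of_nonneg hγ (inv_nonneg.2 hα.le)))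
    exact ⟨T, mem_insert_of_mem _ hT, fun _ => hlT, hTd.trans (min_le_left _ _),
      (ENNReal.le_rpow_inv_iff hα).1 (hTd.trans (min_le_right _ _))⟩
  have hd₂₃ε := hd₂₃.trans (ENNReal.ofReal_le_ofReal hulε)
  have hd₁ε := hd₁.trans (ENNReal.ofReal_le_ofReal (by linarith))
  refine ⟨fun i => [U₁, U₂, U₃, T].getD i ∅, fun i => ?_, fun z ⟨hz, hz₀⟩ => ?_, fun i => ?_, ?_⟩
  · rcases i with _ | _ | _ | _ | i <;> simp [*]
  · rcases (Ioc_insert_left hlu ▸ hz : z ∈ insert l (Ioc l u)) with rfl | hz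
    · exact mem_iUnion.2 ⟨3, by simpa using hlT hz₀.1⟩
    rcases hcov hz with (hz | hz) | hz
    exacts [mem_iUnion.2 ⟨0, by simpa using hz⟩, mem_iUnion.2 ⟨1, by simpa using hz⟩,
      mem_iUnion.2 ⟨2, by simpa using hz⟩]
  · rcases i with _ | _ | _ | _ | i
    exacts [hd₁ε, le_self_add.trans hd₂₃ε, le_add_self.trans hd₂₃ε, hTd, by simp]
  · rw [tsum_eq_sum (s := Finset.range 4) fun i hi => by
      simp [List.getD_eq_getElem?_getD, show 4 ≤ i by simpa using hi, ENNReal.zero_rpow_of_pos hα]]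
    simp only [Finset.sum_range_succ, Finset.sum_range_zero, zero_add, List.getD_cons_zero,
      List.getD_cons_succ]
    rw [ENNReal.ofReal_mul zero_le_two, ENNReal.ofReal_ofNat] at hd₂₃
    exact add_le_add (hK _ _ _ _ hd₁ hd₂₃) hTγ

theorem coversAtCost_famP {α : ℝ} {K : ℝ≥0∞} (hα : 0 < α)
    (hK : ∀ d d₁ d₂ d₃ : ℝ≥0∞, d₁ ≤ d → d₂ + d₃ ≤ 2 * d → d₁ ^ α + d₂ ^ α + d₃ ^ α ≤ K * d ^ α) :
    CoversAtCost (insert ∅ P.famP) (Ioc 0 1) α K := by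
  intro ε hε
  refine ⟨ENNReal.ofReal (ε / 2), ENNReal.ofReal_pos.2 (by positivity), fun s hs γ hγ => ?_⟩
  set A := s ∩ Ioc (0 : ℝ) 1
  rcases A.eq_empty_or_nonempty with hA | hA
  · refine ⟨fun _ => ∅, fun _ => mem_insert _ _, by rw [hA]; exact empty_subset _,
      fun _ => by simp, ?_⟩
    simp [ENNReal.zero_rpow_of_pos hα]
  have hbdd : Bornology.IsBounded A := (Metric.isBounded_Ioc 0 1).subset inter_subset_right
  have hul : ENNReal.ofReal (sSup A - sInf A) ≤ Metric.ediam s :=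
    (Real.ediam_eq hbdd).symm.le.trans (Metric.ediam_mono inter_subset_left)
  obtain ⟨g, hgΦ, hgcov, hgdiam, hgcost⟩ := P.exists_cover_Icc_inter_Ioc hα hK
    (le_csInf hA fun z hz => hz.2.1.le) (csInf_le_csSup hA hbdd.bddBelow hbdd.bddAbove)
    (csSup_le hA fun z hz => hz.2.2) hε
    (by linarith [(ENNReal.ofReal_le_ofReal_iff (by positivity)).1 (hul.trans hs)]) hγ
  exact ⟨g, hgΦ, fun z hz => hgcov ⟨subset_Icc_csInf_csSup hbdd.bddBelow hbdd.bddAbove hz, hz.2⟩,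
    hgdiam, hgcost.trans (by gcongr)⟩

theorem Hfam_famP_le_mul {α : ℝ} {K : ℝ≥0∞} (hα : 0 < α) (hK₀ : K ≠ 0) (hK : K ≠ ⊤)
    (hcost : ∀ d d₁ d₂ d₃ : ℝ≥0∞, d₁ ≤ d → d₂ + d₃ ≤ 2 * d → d₁ ^ α + d₂ ^ α + d₃ ^ α ≤ K * d ^ α)
    {E : Set ℝ} (hE : E ⊆ Ioc 0 1) : Hfam P.famP α E ≤ K * μH[α] E :=
  (Hfam_le_Hfam_insert_empty hα (fun _ hr => (P.exists_mem_famP_ediam_le ⟨one_pos, le_rfl⟩ hr).imp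
    fun _ ⟨hU, _, hUr⟩ => ⟨hU, hUr⟩) E).trans
    (Hfam_le_mul_hausdorffMeasure hα hK₀ hK (coversAtCost_famP hα hcost) hE)

end PerronSystem

/-- For every `E ⊆ (0,1]` and `α > 0`,
`H^α(E) ≤ H^α(E,𝔓) ≤ 3·H^α(E)`; consequently `𝔓` is a faithful family of coverings for the
Hausdorff dimension calculation on `(0,1]`. -/
theorem famP_faithful (P : PerronSystem) :
    (∀ E : Set ℝ, E ⊆ Set.Ioc 0 1 → ∀ α : ℝ, 0 < α →
      μH[α] E ≤ Hfam P.famP α E ∧ Hfam P.famP α E ≤ 3 * μH[α] E) ∧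
    (∀ E : Set ℝ, E ⊆ Set.Ioc 0 1 → dimFam P.famP E = dimH E) := by
  have hcrude : ∀ E : Set ℝ, E ⊆ Ioc 0 1 → ∀ α : ℝ, 0 < α →
      Hfam P.famP α E ≤ 3 * 2 ^ α * μH[α] E := fun E hE α hα =>
    PerronSystem.Hfam_famP_le_mul hα (by positivity) (by finiteness)
      (ENNReal.rpow_add_rpow_add_rpow_le_three_mul_two_rpow_mul hα.le) hE
  refine ⟨fun E hE α hα => ⟨hausdorffMeasure_le_Hfam _ _ _, ?_⟩,
    fun E hE => dimFam_eq_dimH fun α hα hμ => ?_⟩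
  · rcases le_or_gt α 1 with hα₁ | hα₁
    · exact PerronSystem.Hfam_famP_le_mul hα three_ne_zero ENNReal.ofNat_ne_top
        (ENNReal.rpow_add_rpow_add_rpow_le_three_mul hα hα₁) hE
    · simpa [hausdorffMeasure_real_eq_zero_of_one_lt hα₁] using hcrude E hE α hα
  · simpa [hμ] using hcrude E hE α hα
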